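/- Let W be a real Banach space and ω : W × W → ℝ a continuous alternating bilinear form such that the induced map ω♭ : W → W*, w ↦ ω(w,−), is injective (a weak symplectic form). Call a smooth function f : W → ℝ Hamiltonian if there exists a smooth map X_f : W → W such that Df(x)(v) = ω(X_f(x), v) for all x, v ∈ W; by injectivity of ω♭ such X_f is unique. Then: (i) constant functions are Hamiltonian and the set C_ω of Hamiltonian functions is closed under ℝ-linear combinations and pointwise products; (ii) for f, g ∈ C_ω the bracket {f,g}(x) := ω(X_f(x), X_g(x)) is again a Hamiltonian function; and (iii) (C_ω, {·,·}) is a Poisson algebra: the bracket is ℝ-bilinear, antisymmetric, satisfies the Leibniz rule {f, g·h} = {f,g}·h + g·{f,h}, and satisfies the Jacobi identity. -/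

import Mathlib

/-- A function `f` on a weak symplectic Banach space `(W, ω)` is Hamiltonian if it is
smooth and admits a smooth Hamiltonian vector field `X_f` with
`Df(x)(v) = ω(X_f(x), v)`. -/
def IsHamiltonian {W : Type*} [NormedAddCommGroup W] [NormedSpace ℝ W]
    (ω : W →L[ℝ] W →L[ℝ] ℝ) (f : W → ℝ) : Prop :=
  ContDiff ℝ (⊤ : ℕ∞) f ∧
    ∃ X : W → W, ContDiff ℝ (⊤ : ℕ∞) X ∧ ∀ x v : W, fderiv ℝ f x v = ω (X x) v

open Classical in
/-- The Hamiltonian vector field of `f` (a choice of witness; it is unique when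
`ω♭` is injective). -/
noncomputable def hamVF {W : Type*} [NormedAddCommGroup W] [NormedSpace ℝ W]
    (ω : W →L[ℝ] W →L[ℝ] ℝ) (f : W → ℝ) : W → W :=
  if h : ∃ X : W → W, ContDiff ℝ (⊤ : ℕ∞) X ∧ ∀ x v : W, fderiv ℝ f x v = ω (X x) v
  then h.choose else 0

/-- The Poisson bracket `{f,g}(x) = ω(X_f(x), X_g(x))`. -/
noncomputable def pBracket {W : Type*} [NormedAddCommGroup W] [NormedSpace ℝ W]
    (ω : W →L[ℝ] W →L[ℝ] ℝ) (f g : W → ℝ) : W → ℝ :=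
  fun x => ω (hamVF ω f x) (hamVF ω g x)

/-!
Everything follows from one observation: for a Hamiltonian `f` with field `X`, the bilinear
form `(u, v) ↦ ω (DX(x) u) v` is the Hessian of `f` at `x`, hence symmetric. Together with
antisymmetry of `ω` this computes the derivative of `{f, g} = ω (X_f, X_g)` and shows that its
Hamiltonian field is the Lie bracket `[X_g, X_f]`. Injectivity of `ω♭` makes the Hamiltonian
field unique, so the fields of `c • f + g`, `f * g` and `{f, g}` are the expected ones, and the
Poisson algebra identities become pointwise identities in `ω`; Jacobi is again Hessian symmetry.
-/

section

open ContinuousLinearMap VectorField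

variable {W : Type*} [NormedAddCommGroup W] [NormedSpace ℝ W] {ω : W →L[ℝ] W →L[ℝ] ℝ}
  {f f' g g' h : W → ℝ} {X Y : W → W}

def IsHamVF (ω : W →L[ℝ] W →L[ℝ] ℝ) (f : W → ℝ) (X : W → W) : Prop :=
  ∀ x v : W, fderiv ℝ f x v = ω (X x) v

theorem apply_swap_of_alt (halt : ∀ w : W, ω w w = 0) (a b : W) : ω a b = -ω b a := by
  have h := halt (a + b)
  simp only [map_add, add_apply, halt] at h
  linarith

theorem isHamVF_of_hasFDerivAt (h : ∀ x, HasFDerivAt f (ω (X x)) x) : IsHamVF ω f X :=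
  fun x v => by rw [(h x).fderiv]

theorem IsHamVF.eq (hinj : Function.Injective (fun w : W => ω w))
    (hX : IsHamVF ω f X) (hY : IsHamVF ω f Y) : X = Y :=
  funext fun x => hinj <| ContinuousLinearMap.ext fun v => (hX x v).symm.trans (hY x v)

namespace IsHamiltonian

theorem contDiff_hamVF (hf : IsHamiltonian ω f) : ContDiff ℝ (⊤ : ℕ∞) (hamVF ω f) := by
  rw [hamVF, dif_pos hf.2]
  exact hf.2.choose_spec.1

theorem isHamVF (hf : IsHamiltonian ω f) : IsHamVF ω f (hamVF ω f) := by
  rw [hamVF, dif_pos hf.2]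
  exact hf.2.choose_spec.2

theorem hamVF_eq (hinj : Function.Injective (fun w : W => ω w)) (hf : IsHamiltonian ω f)
    (hX : IsHamVF ω f X) : hamVF ω f = X :=
  hf.isHamVF.eq hinj hX

theorem hasFDerivAt (hf : IsHamiltonian ω f) (x : W) : HasFDerivAt f (ω (hamVF ω f x)) x := by
  have h : fderiv ℝ f x = ω (hamVF ω f x) := ContinuousLinearMap.ext (hf.isHamVF x)
  exact h ▸ (hf.1.differentiable (by simp) x).hasFDerivAt

theorem hasFDerivAt_hamVF (hf : IsHamiltonian ω f) (x : W) :
    HasFDerivAt (hamVF ω f) (fderiv ℝ (hamVF ω f) x) x :=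
  (hf.contDiff_hamVF.differentiable (by simp) x).hasFDerivAt

theorem apply_fderiv_hamVF_symm (hf : IsHamiltonian ω f) (x u v : W) :
    ω (fderiv ℝ (hamVF ω f) x u) v = ω (fderiv ℝ (hamVF ω f) x v) u := by
  simpa using second_derivative_symmetric hf.hasFDerivAt
    (ω.hasFDerivAt.comp x (hf.hasFDerivAt_hamVF x)) u v

theorem apply_fderiv_hamVF_comm (halt : ∀ w : W, ω w w = 0) (hf : IsHamiltonian ω f)
    (x a b : W) : ω a (fderiv ℝ (hamVF ω f) x b) = ω b (fderiv ℝ (hamVF ω f) x a) := by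
  rw [apply_swap_of_alt halt a, hf.apply_fderiv_hamVF_symm, ← apply_swap_of_alt halt]

theorem isHamVF_smul_add (hf : IsHamiltonian ω f) (hg : IsHamiltonian ω g) (c : ℝ) :
    IsHamVF ω (c • f + g) (c • hamVF ω f + hamVF ω g) :=
  isHamVF_of_hasFDerivAt fun x => by
    simpa using ((hf.hasFDerivAt x).const_smul c).add (hg.hasFDerivAt x)

theorem isHamVF_mul (hf : IsHamiltonian ω f) (hg : IsHamiltonian ω g) :
    IsHamVF ω (f * g) (f • hamVF ω g + g • hamVF ω f) :=
  isHamVF_of_hasFDerivAt fun x => by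
    simpa using (hf.hasFDerivAt x).mul (hg.hasFDerivAt x)

theorem isHamVF_pBracket (halt : ∀ w : W, ω w w = 0) (hf : IsHamiltonian ω f)
    (hg : IsHamiltonian ω g) :
    IsHamVF ω (pBracket ω f g) (lieBracket ℝ (hamVF ω g) (hamVF ω f)) := by
  intro x v
  have hd : HasFDerivAt (pBracket ω f g) _ x :=
    (ω.hasFDerivAt.comp x (hf.hasFDerivAt_hamVF x)).clm_apply (hg.hasFDerivAt_hamVF x)
  rw [hd.fderiv]
  simp only [lieBracket, add_apply, comp_apply, Function.comp_apply, flip_apply, map_sub,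
    sub_apply, hf.apply_fderiv_hamVF_symm x v, hg.apply_fderiv_hamVF_comm halt x (hamVF ω f x) v,
    apply_swap_of_alt halt v]
  ring

end IsHamiltonian

theorem isHamiltonian_const (c : ℝ) : IsHamiltonian ω (fun _ : W => c) :=
  ⟨contDiff_const, 0, contDiff_const, fun x v => by simp⟩

theorem isHamiltonian_smul_add (hf : IsHamiltonian ω f) (hg : IsHamiltonian ω g) (c : ℝ) :
    IsHamiltonian ω (c • f + g) :=
  ⟨(hf.1.const_smul c).add hg.1, _, (hf.contDiff_hamVF.const_smul c).add hg.contDiff_hamVF,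
    hf.isHamVF_smul_add hg c⟩

theorem isHamiltonian_mul (hf : IsHamiltonian ω f) (hg : IsHamiltonian ω g) :
    IsHamiltonian ω (f * g) :=
  ⟨hf.1.mul hg.1, _, (hf.1.smul hg.contDiff_hamVF).add (hg.1.smul hf.contDiff_hamVF),
    hf.isHamVF_mul hg⟩

theorem isHamiltonian_pBracket (halt : ∀ w : W, ω w w = 0) (hf : IsHamiltonian ω f)
    (hg : IsHamiltonian ω g) : IsHamiltonian ω (pBracket ω f g) :=
  ⟨(ω.contDiff.comp hf.contDiff_hamVF).clm_apply hg.contDiff_hamVF, _,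
    hg.contDiff_hamVF.lieBracket_vectorField hf.contDiff_hamVF (by simp),
    hf.isHamVF_pBracket halt hg⟩

theorem IsHamiltonian.hamVF_smul_add (hinj : Function.Injective (fun w : W => ω w))
    (hf : IsHamiltonian ω f) (hg : IsHamiltonian ω g) (c : ℝ) :
    hamVF ω (c • f + g) = c • hamVF ω f + hamVF ω g :=
  (isHamiltonian_smul_add hf hg c).hamVF_eq hinj (hf.isHamVF_smul_add hg c)

theorem IsHamiltonian.hamVF_mul (hinj : Function.Injective (fun w : W => ω w))
    (hf : IsHamiltonian ω f) (hg : IsHamiltonian ω g) :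
    hamVF ω (f * g) = f • hamVF ω g + g • hamVF ω f :=
  (isHamiltonian_mul hf hg).hamVF_eq hinj (hf.isHamVF_mul hg)

theorem IsHamiltonian.hamVF_pBracket (hinj : Function.Injective (fun w : W => ω w))
    (halt : ∀ w : W, ω w w = 0) (hf : IsHamiltonian ω f) (hg : IsHamiltonian ω g) :
    hamVF ω (pBracket ω f g) = lieBracket ℝ (hamVF ω g) (hamVF ω f) :=
  (isHamiltonian_pBracket halt hf hg).hamVF_eq hinj (hf.isHamVF_pBracket halt hg)

theorem pBracket_smul_add_left (hinj : Function.Injective (fun w : W => ω w))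
    (hf : IsHamiltonian ω f) (hf' : IsHamiltonian ω f') (c : ℝ) :
    pBracket ω (c • f + f') g = c • pBracket ω f g + pBracket ω f' g := by
  funext x
  simp [pBracket, hf.hamVF_smul_add hinj hf' c]

theorem pBracket_smul_add_right (hinj : Function.Injective (fun w : W => ω w))
    (hg : IsHamiltonian ω g) (hg' : IsHamiltonian ω g') (c : ℝ) :
    pBracket ω f (c • g + g') = c • pBracket ω f g + pBracket ω f g' := by
  funext x
  simp [pBracket, hg.hamVF_smul_add hinj hg' c]

theorem pBracket_antisymm (halt : ∀ w : W, ω w w = 0) (f g : W → ℝ) :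
    pBracket ω f g = -pBracket ω g f :=
  funext fun _ => apply_swap_of_alt halt _ _

theorem pBracket_mul_right (hinj : Function.Injective (fun w : W => ω w))
    (hg : IsHamiltonian ω g) (hh : IsHamiltonian ω h) :
    pBracket ω f (g * h) = pBracket ω f g * h + g * pBracket ω f h := by
  funext x
  simp only [pBracket, hg.hamVF_mul hinj hh, Pi.add_apply, Pi.smul_apply', map_add, map_smul,
    Pi.mul_apply, smul_eq_mul]
  ring

theorem pBracket_pBracket_apply (hinj : Function.Injective (fun w : W => ω w))
    (halt : ∀ w : W, ω w w = 0) (hf : IsHamiltonian ω f) (hg : IsHamiltonian ω g) (k : W → ℝ)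
    (x : W) :
    pBracket ω k (pBracket ω f g) x =
      ω (hamVF ω k x) (lieBracket ℝ (hamVF ω g) (hamVF ω f) x) := by
  rw [← hf.hamVF_pBracket hinj halt hg]
  rfl

theorem pBracket_jacobi (hinj : Function.Injective (fun w : W => ω w))
    (halt : ∀ w : W, ω w w = 0) (hf : IsHamiltonian ω f) (hg : IsHamiltonian ω g)
    (hh : IsHamiltonian ω h) :
    pBracket ω f (pBracket ω g h) + pBracket ω g (pBracket ω h f) +
      pBracket ω h (pBracket ω f g) = 0 := by
  funext x
  simp only [Pi.add_apply, Pi.zero_apply, pBracket_pBracket_apply hinj halt hg hh,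
    pBracket_pBracket_apply hinj halt hh hf, pBracket_pBracket_apply hinj halt hf hg, lieBracket,
    map_sub, hf.apply_fderiv_hamVF_comm halt x (hamVF ω h x),
    hg.apply_fderiv_hamVF_comm halt x (hamVF ω f x),
    hh.apply_fderiv_hamVF_comm halt x (hamVF ω g x)]
  ring

end

theorem hamiltonian_poisson_algebra_general {W : Type*} [NormedAddCommGroup W] [NormedSpace ℝ W]
    (ω : W →L[ℝ] W →L[ℝ] ℝ)
    (halt : ∀ w : W, ω w w = 0)
    (hinj : Function.Injective (fun w : W => ω w)) :
    -- (i) constants are Hamiltonian; closure under linear combinations and products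
    ((∀ c : ℝ, IsHamiltonian ω (fun _ => c)) ∧
      (∀ (f g : W → ℝ) (c : ℝ), IsHamiltonian ω f → IsHamiltonian ω g →
        IsHamiltonian ω (c • f + g) ∧ IsHamiltonian ω (f * g))) ∧
    -- (ii) the bracket of Hamiltonian functions is Hamiltonian
    (∀ f g : W → ℝ, IsHamiltonian ω f → IsHamiltonian ω g →
      IsHamiltonian ω (pBracket ω f g)) ∧
    -- (iii) Poisson algebra structure
    ((∀ (f f' g : W → ℝ) (c : ℝ), IsHamiltonian ω f → IsHamiltonian ω f' →
        IsHamiltonian ω g →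
        pBracket ω (c • f + f') g = c • pBracket ω f g + pBracket ω f' g) ∧
      (∀ (f g g' : W → ℝ) (c : ℝ), IsHamiltonian ω f → IsHamiltonian ω g →
        IsHamiltonian ω g' →
        pBracket ω f (c • g + g') = c • pBracket ω f g + pBracket ω f g') ∧
      (∀ f g : W → ℝ, IsHamiltonian ω f → IsHamiltonian ω g →
        pBracket ω f g = -pBracket ω g f) ∧
      (∀ f g h : W → ℝ, IsHamiltonian ω f → IsHamiltonian ω g → IsHamiltonian ω h →
        pBracket ω f (g * h) = pBracket ω f g * h + g * pBracket ω f h) ∧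
      (∀ f g h : W → ℝ, IsHamiltonian ω f → IsHamiltonian ω g → IsHamiltonian ω h →
        pBracket ω f (pBracket ω g h) + pBracket ω g (pBracket ω h f) +
          pBracket ω h (pBracket ω f g) = 0)) :=
  ⟨⟨isHamiltonian_const, fun _ _ c hf hg => ⟨isHamiltonian_smul_add hf hg c, isHamiltonian_mul hf hg⟩⟩,
    fun _ _ hf hg => isHamiltonian_pBracket halt hf hg,
    fun _ _ _ c hf hf' _ => pBracket_smul_add_left hinj hf hf' c,
    fun _ _ _ c _ hg hg' => pBracket_smul_add_right hinj hg hg' c,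
    fun f g _ _ => pBracket_antisymm halt f g,
    fun _ _ _ _ hg hh => pBracket_mul_right hinj hg hh,
    fun _ _ _ hf hg hh => pBracket_jacobi hinj halt hf hg hh⟩

/-- On a real Banach space with a weak symplectic form `ω`, the set of Hamiltonian
functions is closed under constants, `ℝ`-linear combinations, products, and the
bracket `{f,g} = ω(X_f, X_g)`, and the latter makes it a Poisson algebra. -/
theorem hamiltonian_poisson_algebra {W : Type*} [NormedAddCommGroup W] [NormedSpace ℝ W]
    [CompleteSpace W]
    (ω : W →L[ℝ] W →L[ℝ] ℝ)
    (halt : ∀ w : W, ω w w = 0)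
    (hinj : Function.Injective (fun w : W => ω w)) :
    -- (i) constants are Hamiltonian; closure under linear combinations and products
    ((∀ c : ℝ, IsHamiltonian ω (fun _ => c)) ∧
      (∀ (f g : W → ℝ) (c : ℝ), IsHamiltonian ω f → IsHamiltonian ω g →
        IsHamiltonian ω (c • f + g) ∧ IsHamiltonian ω (f * g))) ∧
    -- (ii) the bracket of Hamiltonian functions is Hamiltonian
    (∀ f g : W → ℝ, IsHamiltonian ω f → IsHamiltonian ω g →
      IsHamiltonian ω (pBracket ω f g)) ∧
    -- (iii) Poisson algebra structure
    ((∀ (f f' g : W → ℝ) (c : ℝ), IsHamiltonian ω f → IsHamiltonian ω f' →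
        IsHamiltonian ω g →
        pBracket ω (c • f + f') g = c • pBracket ω f g + pBracket ω f' g) ∧
      (∀ (f g g' : W → ℝ) (c : ℝ), IsHamiltonian ω f → IsHamiltonian ω g →
        IsHamiltonian ω g' →
        pBracket ω f (c • g + g') = c • pBracket ω f g + pBracket ω f g') ∧
      (∀ f g : W → ℝ, IsHamiltonian ω f → IsHamiltonian ω g →
        pBracket ω f g = -pBracket ω g f) ∧
      (∀ f g h : W → ℝ, IsHamiltonian ω f → IsHamiltonian ω g → IsHamiltonian ω h →
        pBracket ω f (g * h) = pBracket ω f g * h + g * pBracket ω f h) ∧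
      (∀ f g h : W → ℝ, IsHamiltonian ω f → IsHamiltonian ω g → IsHamiltonian ω h →
        pBracket ω f (pBracket ω g h) + pBracket ω g (pBracket ω h f) +
          pBracket ω h (pBracket ω f g) = 0)) :=
  hamiltonian_poisson_algebra_general ω halt hinj
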